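/- Fix real θ > 0, α > −1, set α' = (α+1)/θ − 1 and θ' = 1/θ. For every integer n ≥ 1 and all x_1,…,x_n > 0, setting u_i = x_i^{1/θ}, one has ∏_{i=1}^n u_i^α · det[𝒦^{(α,θ)}(u_i,u_j)]_{i,j=1}^n · ∏_{i=1}^n (1/θ) x_i^{1/θ−1} = ∏_{i=1}^n x_i^{α'} · det[𝒦^{(α',θ')}(x_i,x_j)]_{i,j=1}^n. In other words, the limit correlation measures ∏_i x_i^α det[𝒦^{(α,θ)}(x_i,x_j)] dx_1⋯dx_n of the biorthogonal Laguerre ensemble are invariant under the change of parameters (α,θ) ↦ ((α+1)/θ−1, 1/θ) combined with the transformation x ↦ x^{1/θ} of the phase space (0,∞). -/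

import Mathlib

/-- The limit kernel `𝒦^{(α,θ)}(x,y)` of the biorthogonal Jacobi/Laguerre ensembles. -/
noncomputable def limitKernel (α θ x y : ℝ) : ℝ :=
  ∑' k : ℕ, ∑' l : ℕ,
    ((-1) ^ k * x ^ k / ((Nat.factorial k : ℝ) * Real.Gamma ((α + 1 + k) / θ))) *
      ((-1) ^ l * y ^ (θ * (l : ℝ)) /
        ((Nat.factorial l : ℝ) * Real.Gamma (α + 1 + θ * l))) *
      (θ / (α + 1 + k + θ * l))

/-!
Write `α' = (α+1)/θ - 1`, `θ' = 1/θ`. After the substitution `x ↦ x^{1/θ}`, the `(k, l)` term of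
the double series for `𝒦^{(α',θ')}(x, y)` is `1/θ` times the `(l, k)` term of the series for
`𝒦^{(α,θ)}(y^{1/θ}, x^{1/θ})`. The double series converges absolutely (`Γ ≥ 1` on `[2, ∞)`, so it
is dominated by a product of exponential series), hence the summations may be swapped and the
new kernel matrix is `1/θ` times the transpose of the old one. Taking determinants, the factor
`θ^{-n}` and the Jacobian `∏ x_i^{1/θ - 1}` combine with `∏ u_i^α` into `∏ x_i^{α'}`.
-/

open Real Filter Nat

lemma Real.one_le_Gamma_of_two_le {s : ℝ} (hs : 2 ≤ s) : 1 ≤ Gamma s :=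
  Gamma_two ▸ Gamma_strictMonoOn_Ici.monotoneOn (Set.mem_Ici.2 le_rfl) hs hs

lemma Real.summable_pow_div_factorial_mul_Gamma (w : ℝ) {s : ℕ → ℝ}
    (hs : Tendsto s atTop atTop) :
    Summable fun k : ℕ => w ^ k / (k ! * Gamma (s k)) := by
  refine .of_norm_bounded_eventually_nat (summable_pow_div_factorial |w|) ?_
  filter_upwards [hs.eventually_ge_atTop 2] with k hk
  have hΓ := one_le_Gamma_of_two_le hk
  have hk! : (0 : ℝ) < k ! := mod_cast k.factorial_pos
  rw [norm_div, norm_pow, Real.norm_eq_abs, Real.norm_of_nonneg (by positivity)]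
  exact div_le_div_of_nonneg_left (by positivity) hk! (le_mul_of_one_le_right hk!.le hΓ)

noncomputable def limitKernelTerm (α θ x y : ℝ) (k l : ℕ) : ℝ :=
  ((-1) ^ k * x ^ k / ((Nat.factorial k : ℝ) * Real.Gamma ((α + 1 + k) / θ))) *
    ((-1) ^ l * y ^ (θ * (l : ℝ)) /
      ((Nat.factorial l : ℝ) * Real.Gamma (α + 1 + θ * l))) *
    (θ / (α + 1 + k + θ * l))

lemma limitKernel_eq_tsum_limitKernelTerm (α θ x y : ℝ) :
    limitKernel α θ x y = ∑' k : ℕ, ∑' l : ℕ, limitKernelTerm α θ x y k l :=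
  rfl

lemma summable_uncurry_limitKernelTerm {α θ : ℝ} (hα : -1 < α) (hθ : 0 < θ) (x : ℝ) {y : ℝ}
    (hy : 0 ≤ y) : Summable (Function.uncurry (limitKernelTerm α θ x y)) := by
  have hk_series :
      Summable fun k : ℕ => (-1) ^ k * x ^ k / (k ! * Gamma ((α + 1 + k) / θ)) := by
    refine (summable_pow_div_factorial_mul_Gamma (-x)
      ((tendsto_atTop_add_const_left _ (α + 1) tendsto_natCast_atTop_atTop).atTop_div_const
        hθ)).congr fun k => ?_
    rw [neg_pow]
  have hl_series :
      Summable fun l : ℕ => (-1) ^ l * y ^ (θ * (l : ℝ)) / (l ! * Gamma (α + 1 + θ * l)) := by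
    refine (summable_pow_div_factorial_mul_Gamma (-(y ^ θ))
      (tendsto_atTop_add_const_left _ (α + 1)
        (tendsto_natCast_atTop_atTop.const_mul_atTop hθ))).congr fun l => ?_
    rw [neg_pow, rpow_mul hy, rpow_natCast]
  refine .of_norm_bounded ((hk_series.norm.mul_norm hl_series.norm).mul_left (θ / (α + 1)))
    fun ⟨k, l⟩ => ?_
  have hden : α + 1 ≤ α + 1 + k + θ * l := by
    have : 0 ≤ θ * l := by positivity
    linarith [(Nat.cast_nonneg k : (0:ℝ) ≤ k)]
  have hα1 : 0 < α + 1 := by linarith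
  rw [Function.uncurry_apply_pair, limitKernelTerm, norm_mul, mul_comm]
  gcongr
  rw [Real.norm_of_nonneg (div_nonneg hθ.le (by linarith))]
  exact div_le_div_of_nonneg_left hθ.le hα1 hden

lemma limitKernelTerm_dual {α θ x y : ℝ} (hθ : θ ≠ 0) (hx : 0 ≤ x) (hy : 0 ≤ y) (k l : ℕ) :
    limitKernelTerm ((α + 1) / θ - 1) (1 / θ) x y k l
      = 1 / θ * limitKernelTerm α θ (y ^ (1 / θ)) (x ^ (1 / θ)) l k := by
  have hΓk : ((α + 1) / θ - 1 + 1 + k) / (1 / θ) = α + 1 + θ * k := by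
    field_simp; ring
  have hΓl : (α + 1) / θ - 1 + 1 + 1 / θ * l = (α + 1 + l) / θ := by
    field_simp; ring
  have hden : 1 / θ / ((α + 1) / θ - 1 + 1 + k + 1 / θ * l)
      = 1 / θ * (θ / (α + 1 + l + θ * k)) := by
    rw [show (α + 1) / θ - 1 + 1 + k + 1 / θ * l = (α + 1 + l + θ * k) / θ by field_simp; ring]
    field_simp
  have hyl : y ^ (1 / θ * (l : ℝ)) = (y ^ (1 / θ)) ^ l := by rw [rpow_mul hy, rpow_natCast]
  have hxk : (x ^ (1 / θ)) ^ (θ * (k : ℝ)) = x ^ k := by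
    rw [← rpow_mul hx, show 1 / θ * (θ * k) = k by field_simp, rpow_natCast]
  simp only [limitKernelTerm]
  rw [hΓk, hΓl, hden, hyl, hxk]
  ring

lemma limitKernel_dual {α θ x y : ℝ} (hα : -1 < α) (hθ : 0 < θ) (hx : 0 ≤ x) (hy : 0 ≤ y) :
    limitKernel ((α + 1) / θ - 1) (1 / θ) x y
      = 1 / θ * limitKernel α θ (y ^ (1 / θ)) (x ^ (1 / θ)) := by
  simp only [limitKernel_eq_tsum_limitKernelTerm, limitKernelTerm_dual hθ.ne' hx hy,
    tsum_mul_left]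
  rw [(summable_uncurry_limitKernelTerm hα hθ _ (rpow_nonneg hx _)).tsum_comm]

theorem laguerre_limit_measure_invariance_general (θ α : ℝ) (hθ : 0 < θ) (hα : -1 < α)
    (n : ℕ) (x : Fin n → ℝ) (hx : ∀ i, 0 < x i) :
    (∏ i, (x i ^ (1 / θ)) ^ α) *
        Matrix.det (Matrix.of fun i j : Fin n =>
          limitKernel α θ (x i ^ (1 / θ)) (x j ^ (1 / θ))) *
        (∏ i, (1 / θ) * x i ^ (1 / θ - 1))
      = (∏ i, x i ^ ((α + 1) / θ - 1)) *
          Matrix.det (Matrix.of fun i j : Fin n =>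
            limitKernel ((α + 1) / θ - 1) (1 / θ) (x i) (x j)) := by
  set K := Matrix.of fun i j : Fin n => limitKernel α θ (x i ^ (1 / θ)) (x j ^ (1 / θ))
  have hK : (Matrix.of fun i j : Fin n => limitKernel ((α + 1) / θ - 1) (1 / θ) (x i) (x j))
      = (1 / θ) • K.transpose := by
    ext i j
    exact limitKernel_dual hα hθ (hx i).le (hx j).le
  have hweight : ∀ i, (x i ^ (1 / θ)) ^ α * x i ^ (1 / θ - 1) = x i ^ ((α + 1) / θ - 1) := by
    intro i
    rw [← rpow_mul (hx i).le, ← rpow_add (hx i)]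
    congr 1
    field_simp
    ring
  rw [hK, Matrix.det_smul, Matrix.det_transpose, Fintype.card_fin, Finset.prod_mul_distrib,
    Finset.prod_const, Finset.card_univ, Fintype.card_fin,
    ← Finset.prod_congr rfl fun i _ => hweight i, Finset.prod_mul_distrib]
  ring

/-- **Invariance of the limit correlation measures of the biorthogonal Laguerre
ensemble** under `(α,θ) ↦ ((α+1)/θ - 1, 1/θ)` combined with `x ↦ x^{1/θ}`. -/
theorem laguerre_limit_measure_invariance (θ α : ℝ) (hθ : 0 < θ) (hα : -1 < α)
    (n : ℕ) (hn : 1 ≤ n) (x : Fin n → ℝ) (hx : ∀ i, 0 < x i) :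
    (∏ i, (x i ^ (1 / θ)) ^ α) *
        Matrix.det (Matrix.of fun i j : Fin n =>
          limitKernel α θ (x i ^ (1 / θ)) (x j ^ (1 / θ))) *
        (∏ i, (1 / θ) * x i ^ (1 / θ - 1))
      = (∏ i, x i ^ ((α + 1) / θ - 1)) *
          Matrix.det (Matrix.of fun i j : Fin n =>
            limitKernel ((α + 1) / θ - 1) (1 / θ) (x i) (x j)) :=
  laguerre_limit_measure_invariance_general θ α hθ hα n x hx
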